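/- arXiv:2402.02264 — 5 statements merged into one kernel-verified Lean document; each statement's English description precedes it below -/
import Mathlib

section
/- Suppose μ_X/σ_X = μ_Y/σ_Y, i.e. r_X = r_Y. Then for every function f : ℝ → ℝ of class C⁴ and every x ∈ ℝ, A₁f(x) = A₂g(x), where g(x) = (1−ρ)s_n·f′(x) + f(x); that is, the fourth-order Stein operator A₁ applied to f coincides with the third-order Stein operator A₂ applied to g. -/
/-- The fourth-order Stein operator `A₁` (with `s_n = σXσY/n`, `r_X = μX/σX`, `r_Y = μY/σY`). -/
noncomputable def A1 (n : ℕ) (μX μY σX σY ρ : ℝ) (f : ℝ → ℝ) (x : ℝ) : ℝ :=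
  (σX * σY / (n : ℝ)) ^ 4 * (1 - ρ ^ 2) ^ 2 * x * iteratedDeriv 4 f x
    + (σX * σY / (n : ℝ)) ^ 3 * (1 - ρ ^ 2)
        * ((n : ℝ) * (σX * σY / (n : ℝ)) * (1 - ρ ^ 2) + 4 * ρ * x) * iteratedDeriv 3 f x
    + (σX * σY / (n : ℝ)) ^ 2
        * ((n : ℝ) * (σX * σY / (n : ℝ)) * (ρ * ((μX / σX) ^ 2 + (μY / σY) ^ 2)
              - (1 + ρ ^ 2) * (μX / σX) * (μY / σY) + 3 * ρ * (1 - ρ ^ 2))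
            + (6 * ρ ^ 2 - 2) * x) * iteratedDeriv 2 f x
    + (σX * σY / (n : ℝ))
        * ((n : ℝ) * (σX * σY / (n : ℝ)) * (2 * ρ * (μX / σX) * (μY / σY) - (μX / σX) ^ 2
              - (μY / σY) ^ 2 + 3 * ρ ^ 2 - 1) - 4 * ρ * x) * iteratedDeriv 1 f x
    + (x - μX * μY - (n : ℝ) * (σX * σY / (n : ℝ)) * ρ) * f x

/-- The third-order Stein operator `A₂` (with `s_n = σXσY/n`, `r_X = μX/σX`, `r_Y = μY/σY`). -/
noncomputable def A2 (n : ℕ) (μX μY σX σY ρ : ℝ) (f : ℝ → ℝ) (x : ℝ) : ℝ :=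
  (σX * σY / (n : ℝ)) ^ 3 * (1 - ρ ^ 2) * (1 + ρ) * x * iteratedDeriv 3 f x
    + (σX * σY / (n : ℝ)) ^ 2 * (1 + ρ)
        * ((n : ℝ) * (σX * σY / (n : ℝ)) * (1 - ρ ^ 2) + (3 * ρ - 1) * x) * iteratedDeriv 2 f x
    + (σX * σY / (n : ℝ))
        * ((n : ℝ) * (σX * σY / (n : ℝ))
              * (2 * ρ ^ 2 + ρ - 1 - (1 - ρ) * (μX / σX) * (μY / σY))
            - (3 * ρ + 1) * x) * iteratedDeriv 1 f x
    + (x - (n : ℝ) * (σX * σY / (n : ℝ)) * ρ - μX * μY) * f x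

/-! Once `r_X = r_Y = r`, write `μ_X = r σ_X` and `μ_Y = r σ_Y`. Since
`g^(k) = (1 - ρ) sₙ f^(k+1) + f^(k)`, both sides are linear combinations of `f, f', …, f⁗`
whose coefficients are polynomials in `sₙ, r, ρ, x`; these coefficients agree, i.e. `A₁`
factors as `A₂ ∘ (1 + (1 - ρ) sₙ d/dx)`. -/

theorem iteratedDeriv_const_smul_deriv_add {𝕜 F : Type*} [NontriviallyNormedField 𝕜]
    [NormedAddCommGroup F] [NormedSpace 𝕜 F] {k : ℕ} {f : 𝕜 → F}
    (hf : ContDiff 𝕜 (k + 1) f) (c : 𝕜) (x : 𝕜) :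
    iteratedDeriv k (fun y => c • deriv f y + f y) x
      = c • iteratedDeriv (k + 1) f x + iteratedDeriv k f x := by
  rw [iteratedDeriv_fun_add ((hf.deriv'.const_smul c).contDiffAt)
      (hf.of_le (by exact_mod_cast k.le_succ)).contDiffAt,
    iteratedDeriv_fun_const_smul_field, iteratedDeriv_succ']

theorem A1_eq_A2_of_substitution_general
    (μX μY σX σY ρ : ℝ) (hσX : 0 < σX) (hσY : 0 < σY)
    (n : ℕ) (hn : 1 ≤ n)
    (heq : μX / σX = μY / σY)
    (s : ℝ) (hs : s = σX * σY / n)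
    (f : ℝ → ℝ) (hf : ContDiff ℝ 4 f) (x : ℝ) :
    A1 n μX μY σX σY ρ f x
      = A2 n μX μY σX σY ρ (fun y => (1 - ρ) * s * deriv f y + f y) x := by
  have hg (k : ℕ) (hk : k + 1 ≤ 4) := iteratedDeriv_const_smul_deriv_add
    (hf.of_le (by exact_mod_cast hk)) ((1 - ρ) * s) x
  simp only [smul_eq_mul] at hg
  have hns : (n : ℝ) * (σX * σY / n) = σX * σY :=
    mul_div_cancel₀ _ (Nat.cast_ne_zero.mpr (by omega))
  obtain ⟨r, rfl, rfl⟩ : ∃ r, μX = r * σX ∧ μY = r * σY :=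
    ⟨μY / σY, by rw [← heq]; field_simp, by field_simp⟩
  simp only [A1, A2, hg 3 le_rfl, hg 2 (by norm_num), hg 1 (by norm_num), hns,
    mul_div_cancel_right₀ r hσX.ne', mul_div_cancel_right₀ r hσY.ne', iteratedDeriv_one]
  subst hs
  ring

/-- In the case `μX/σX = μY/σY`, the fourth-order Stein operator `A₁` applied to a `C⁴` function
`f` coincides with the third-order Stein operator `A₂` applied to
`g = (1 - ρ) sₙ f' + f`, where `sₙ = σXσY/n`. -/
theorem A1_eq_A2_of_substitution
    (μX μY σX σY ρ : ℝ) (hσX : 0 < σX) (hσY : 0 < σY)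
    (hρ₁ : -1 < ρ) (hρ₂ : ρ < 1) (n : ℕ) (hn : 1 ≤ n)
    (heq : μX / σX = μY / σY)
    (s : ℝ) (hs : s = σX * σY / n)
    (f : ℝ → ℝ) (hf : ContDiff ℝ 4 f) (x : ℝ) :
    A1 n μX μY σX σY ρ f x
      = A2 n μX μY σX σY ρ (fun y => (1 - ρ) * s * deriv f y + f y) x :=
  A1_eq_A2_of_substitution_general μX μY σX σY ρ hσX hσY n hn heq s hs f hf x
end

section
/- Let X and Y be independent random variables with X ~ N(1,1) and Y ~ N(0,1), and let Z = XY. Suppose a_{0,j}, a_{1,j} ∈ ℝ for j = 0,1,2,3 are such that E[∑_{j=0}^{3}(a_{0,j}+a_{1,j}Z)·f^{(j)}(Z)] = 0 for every polynomial f (equivalently, for f(x) = x^k, k = 0,1,…,7), where f^{(0)} = f. Then a_{0,j} = a_{1,j} = 0 for all j = 0,1,2,3. In other words, there is no nonzero third-order Stein operator with linear coefficients for the product of an N(1,1) random variable and an independent N(0,1) random variable. -/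
/-!
Since `X` and `Y` are independent, `E[Zⁿ] = E[Xⁿ] E[Yⁿ]`, and the moments of `N(μ, v)` obey
`m (n + 2) = μ m (n + 1) + (n + 1) v m n`, as one sees by differentiating the moment generating
function `exp (μ t + v t² / 2)`, whose derivative is `(μ + v t)` times itself. Testing the operator
on `f = xᵏ` turns the hypothesis into `E[∑ⱼ k!/(k-j)! (a₀ⱼ Z^(k-j) + a₁ⱼ Z^(k-j+1))] = 0`, that is,
eight linear equations in the eight coefficients, built from the moments
`E[Z⁰], …, E[Z⁸] = 1, 0, 2, 0, 30, 0, 1140, 0, 80220`; this system is nonsingular.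
-/

open MeasureTheory ProbabilityTheory Real
open scoped NNReal

noncomputable def gaussianMoment (μ v : ℝ) : ℕ → ℝ
  | 0 => 1
  | 1 => μ
  | n + 2 => μ * gaussianMoment μ v (n + 1) + (n + 1) * v * gaussianMoment μ v n

section ExpQuadratic

variable (μ v : ℝ)

lemma hasDerivAt_exp_quadratic (t : ℝ) :
    HasDerivAt (fun t ↦ rexp (μ * t + v * t ^ 2 / 2))
      ((μ + v * t) * rexp (μ * t + v * t ^ 2 / 2)) t := by
  have h : HasDerivAt (fun t ↦ μ * t + v * t ^ 2 / 2) (μ + v * t) t := by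
    refine (((hasDerivAt_id' t).const_mul μ).fun_add
      (((hasDerivAt_pow 2 t).const_mul v).div_const 2)).congr_deriv ?_
    norm_num
    ring
  simpa [mul_comm] using h.exp

lemma iteratedDeriv_exp_quadratic_add_two (n : ℕ) (t : ℝ) :
    iteratedDeriv (n + 2) (fun t ↦ rexp (μ * t + v * t ^ 2 / 2)) t =
      (μ + v * t) * iteratedDeriv (n + 1) (fun t ↦ rexp (μ * t + v * t ^ 2 / 2)) t
        + (n + 1) * v * iteratedDeriv n (fun t ↦ rexp (μ * t + v * t ^ 2 / 2)) t := by
  set g := fun t ↦ rexp (μ * t + v * t ^ 2 / 2)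
  have hD (k : ℕ) (t : ℝ) : HasDerivAt (iteratedDeriv k g) (iteratedDeriv (k + 1) g t) t := by
    rw [iteratedDeriv_succ]
    exact ((ContDiff.differentiable_iteratedDeriv (n := ⊤) k (by fun_prop)
      (WithTop.coe_lt_top _)) t).hasDerivAt
  have hlin (t : ℝ) : HasDerivAt (fun t ↦ μ + v * t) v t := by
    simpa using ((hasDerivAt_id t).const_mul v).const_add μ
  induction n generalizing t with
  | zero =>
    have h1 (t : ℝ) : iteratedDeriv 1 g t = (μ + v * t) * iteratedDeriv 0 g t := by
      simpa using (hasDerivAt_exp_quadratic μ v t).deriv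
    have key := ((hlin t).fun_mul (hD 0 t)).congr_of_eventuallyEq (.of_forall h1)
    rw [(hD 1 t).unique key, h1]
    push_cast
    ring
  | succ n ih =>
    have key := (((hlin t).fun_mul (hD (n + 1) t)).fun_add
      ((hD n t).const_mul _)).congr_of_eventuallyEq (.of_forall ih)
    rw [(hD (n + 2) t).unique key]
    push_cast
    ring

lemma iteratedDeriv_exp_quadratic_zero :
    ∀ n, iteratedDeriv n (fun t ↦ rexp (μ * t + v * t ^ 2 / 2)) 0 = gaussianMoment μ v n
  | 0 => by simp [gaussianMoment]
  | 1 => by simp [gaussianMoment, (hasDerivAt_exp_quadratic μ v 0).deriv]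
  | n + 2 => by
    rw [iteratedDeriv_exp_quadratic_add_two, iteratedDeriv_exp_quadratic_zero (n + 1),
      iteratedDeriv_exp_quadratic_zero n, gaussianMoment]
    ring

end ExpQuadratic

lemma integral_pow_gaussianReal (μ : ℝ) (v : ℝ≥0) (n : ℕ) :
    ∫ x, x ^ n ∂gaussianReal μ v = gaussianMoment μ v n := by
  have h0 : (0 : ℝ) ∈ interior (integrableExpSet id (gaussianReal μ v)) := by simp
  rw [← iteratedDeriv_exp_quadratic_zero, ← mgf_id_gaussianReal, iteratedDeriv_mgf_zero h0]
  simp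

lemma integrable_pow_gaussianReal (μ : ℝ) (v : ℝ≥0) (n : ℕ) :
    Integrable (fun x ↦ x ^ n) (gaussianReal μ v) :=
  integrable_pow_of_mem_interior_integrableExpSet (X := id) (by simp) n

section RandomVariables

variable {Ω : Type*} [MeasurableSpace Ω] {P : Measure Ω} {X Y : Ω → ℝ} {μ : ℝ} {v : ℝ≥0}

lemma aemeasurable_of_map_eq_gaussianReal (hX : P.map X = gaussianReal μ v) :
    AEMeasurable X P :=
  aemeasurable_of_map_neZero (hX ▸ inferInstance)

lemma integrable_pow_of_map_eq_gaussianReal (hX : P.map X = gaussianReal μ v) (n : ℕ) :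
    Integrable (fun ω ↦ X ω ^ n) P :=
  (integrable_map_measure (continuous_pow n).aestronglyMeasurable
    (aemeasurable_of_map_eq_gaussianReal hX)).1 (hX ▸ integrable_pow_gaussianReal μ v n)

lemma integral_pow_of_map_eq_gaussianReal (hX : P.map X = gaussianReal μ v) (n : ℕ) :
    ∫ ω, X ω ^ n ∂P = gaussianMoment μ v n := by
  rw [← integral_pow_gaussianReal, ← hX,
    integral_map (aemeasurable_of_map_eq_gaussianReal hX) (by fun_prop)]

lemma ProbabilityTheory.IndepFun.integral_mul_pow (hXY : IndepFun X Y P)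
    (hX : AEMeasurable X P) (hY : AEMeasurable Y P) (n : ℕ) :
    ∫ ω, (X ω * Y ω) ^ n ∂P = (∫ ω, X ω ^ n ∂P) * ∫ ω, Y ω ^ n ∂P := by
  simp_rw [mul_pow]
  exact (hXY.comp (measurable_id.pow_const n)
    (measurable_id.pow_const n)).integral_fun_mul_eq_mul_integral
      (hX.pow_const n).aestronglyMeasurable (hY.pow_const n).aestronglyMeasurable

lemma ProbabilityTheory.IndepFun.integrable_mul_pow (hXY : IndepFun X Y P) (n : ℕ)
    (hX : Integrable (fun ω ↦ X ω ^ n) P) (hY : Integrable (fun ω ↦ Y ω ^ n) P) :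
    Integrable (fun ω ↦ (X ω * Y ω) ^ n) P := by
  simp_rw [mul_pow]
  exact (hXY.comp (measurable_id.pow_const n) (measurable_id.pow_const n)).integrable_mul hX hY

/-- For `j > k` the truncated exponent `k - j` is harmless: `k.descFactorial j = 0`. -/
lemma integral_sum_linear_mul_iteratedDeriv_pow {d : ℕ}
    (hX : ∀ n, Integrable (fun ω ↦ X ω ^ n) P) (a₀ a₁ : Fin d → ℝ) (k : ℕ) :
    ∫ ω, ∑ j : Fin d, (a₀ j + a₁ j * X ω) * iteratedDeriv j (fun x : ℝ ↦ x ^ k) (X ω) ∂P =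
      ∑ j : Fin d, k.descFactorial j *
        (a₀ j * ∫ ω, X ω ^ (k - j) ∂P + a₁ j * ∫ ω, X ω ^ (k - j + 1) ∂P) := by
  have hpt (ω : Ω) (j : Fin d) :
      (a₀ j + a₁ j * X ω) * iteratedDeriv j (fun x : ℝ ↦ x ^ k) (X ω) =
        k.descFactorial j * (a₀ j * X ω ^ (k - j) + a₁ j * X ω ^ (k - j + 1)) := by
    rw [iteratedDeriv_pow]
    ring
  have hint (j : Fin d) : Integrable
      (fun ω ↦ k.descFactorial j * (a₀ j * X ω ^ (k - j) + a₁ j * X ω ^ (k - j + 1))) P :=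
    (((hX _).const_mul _).add ((hX _).const_mul _)).const_mul _
  simp_rw [hpt]
  rw [integral_finsetSum _ fun j _ ↦ hint j]
  congr! 1 with j
  rw [integral_const_mul, integral_add ((hX _).const_mul _) ((hX _).const_mul _),
    integral_const_mul, integral_const_mul]

end RandomVariables

/-- Odd moments of `Z` vanish, so the system splits by parity into two nonsingular `4 × 4`
systems, in `(a₀ 0, a₀ 2, a₁ 1, a₁ 3)` and in `(a₀ 1, a₀ 3, a₁ 0, a₁ 2)`. -/
lemma eq_zero_of_moment_equations (a₀ a₁ : Fin 4 → ℝ)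
    (h : ∀ k ≤ 7, ∑ j : Fin 4, (k.descFactorial j : ℝ) *
      (a₀ j * (gaussianMoment 1 1 (k - j) * gaussianMoment 0 1 (k - j))
        + a₁ j * (gaussianMoment 1 1 (k - j + 1) * gaussianMoment 0 1 (k - j + 1))) = 0) :
    ∀ j, a₀ j = 0 ∧ a₁ j = 0 := by
  have e0 := h 0 (by norm_num)
  have e1 := h 1 (by norm_num)
  have e2 := h 2 (by norm_num)
  have e3 := h 3 (by norm_num)
  have e4 := h 4 (by norm_num)
  have e5 := h 5 (by norm_num)
  have e6 := h 6 (by norm_num)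
  have e7 := h 7 (by norm_num)
  norm_num [Fin.sum_univ_four, gaussianMoment, Nat.descFactorial] at e0 e1 e2 e3 e4 e5 e6 e7
  intro j
  fin_cases j <;> simp only [Fin.zero_eta, Fin.mk_one, Fin.reduceFinMk] <;>
    exact ⟨by linarith, by linarith⟩

theorem no_third_order_stein_operator_general
    {Ω : Type*} [MeasurableSpace Ω] (P : Measure Ω)
    (X Y : Ω → ℝ)
    (hXY : IndepFun X Y P)
    (hXlaw : Measure.map X P = gaussianReal 1 1)
    (hYlaw : Measure.map Y P = gaussianReal 0 1)
    (a₀ a₁ : Fin 4 → ℝ)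
    (h : ∀ k : ℕ, k ≤ 7 →
      ∫ ω, ∑ j : Fin 4,
        (a₀ j + a₁ j * (X ω * Y ω))
          * iteratedDeriv (j : ℕ) (fun x : ℝ => x ^ k) (X ω * Y ω) ∂P = 0) :
    ∀ j : Fin 4, a₀ j = 0 ∧ a₁ j = 0 := by
  have hZ (n : ℕ) : Integrable (fun ω ↦ (X ω * Y ω) ^ n) P :=
    hXY.integrable_mul_pow n (integrable_pow_of_map_eq_gaussianReal hXlaw n)
      (integrable_pow_of_map_eq_gaussianReal hYlaw n)
  have hM (n : ℕ) : ∫ ω, (X ω * Y ω) ^ n ∂P = gaussianMoment 1 1 n * gaussianMoment 0 1 n := by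
    rw [hXY.integral_mul_pow (aemeasurable_of_map_eq_gaussianReal hXlaw)
      (aemeasurable_of_map_eq_gaussianReal hYlaw),
      integral_pow_of_map_eq_gaussianReal hXlaw, integral_pow_of_map_eq_gaussianReal hYlaw]
    norm_num
  refine eq_zero_of_moment_equations a₀ a₁ fun k hk ↦ ?_
  simpa only [integral_sum_linear_mul_iteratedDeriv_pow hZ, hM] using h k hk

/-- There is no nonzero third-order Stein operator with linear coefficients for the product
`Z = XY` of independent random variables `X ∼ N(1,1)` and `Y ∼ N(0,1)`: if
`E[∑_{j=0}^{3} (a₀ⱼ + a₁ⱼ Z) f⁽ʲ⁾(Z)] = 0` for the monomials `f(x) = xᵏ`, `k = 0,1,…,7`,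
then all the coefficients `a₀ⱼ, a₁ⱼ` vanish. -/
theorem no_third_order_stein_operator
    {Ω : Type*} [MeasurableSpace Ω] (P : Measure Ω) [IsProbabilityMeasure P]
    (X Y : Ω → ℝ) (hX : Measurable X) (hY : Measurable Y)
    (hXY : IndepFun X Y P)
    (hXlaw : Measure.map X P = gaussianReal 1 1)
    (hYlaw : Measure.map Y P = gaussianReal 0 1)
    (a₀ a₁ : Fin 4 → ℝ)
    (h : ∀ k : ℕ, k ≤ 7 →
      ∫ ω, ∑ j : Fin 4,
        (a₀ j + a₁ j * (X ω * Y ω))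
          * iteratedDeriv (j : ℕ) (fun x : ℝ => x ^ k) (X ω * Y ω) ∂P = 0) :
    ∀ j : Fin 4, a₀ j = 0 ∧ a₁ j = 0 :=
  no_third_order_stein_operator_general P X Y hXY hXlaw hYlaw a₀ a₁ h
end

section
/- Let Z have the law PN(μ_X,μ_Y;σ_X²,σ_Y²;ρ) and write m = E[Z] = μ_Xμ_Y + ρσ_Xσ_Y. Then the kurtosis of Z, namely Kurt[Z] = E[(Z−m)⁴]/(E[(Z−m)²])², is given by Kurt[Z] = [3(r_X⁴ + r_Y⁴ + 4ρ r_Xr_Y(r_X²+r_Y²) + 2(2ρ²+1)r_X²r_Y²) + 3(2(7ρ²+3)(r_X²+r_Y²) + 4ρ(3ρ²+7)r_Xr_Y + 3ρ⁴ + 14ρ² + 3)] / (r_X² + r_Y² + 2ρ r_Xr_Y + ρ² + 1)². -/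
/-!
Write `W = (Z - m) / (σX σY)`, so that the kurtosis is `E[W⁴] / E[W²]²` and
`W = A(U) + B(U) V` with `A(u) = -ρ + (ρ r_X + r_Y) u + ρ u²`, `B(u) = √(1 - ρ²) (r_X + u)`.
Integrating out `V` first gives `E[W²] = E[A² + B²]` and `E[W⁴] = E[A⁴ + 6 A² B² + 3 B⁴]`, in which
`B² = (1 - ρ²) (r_X + u)²` no longer involves the square root. What remains are expectations of
polynomials of degree at most 8 in `U`, given by the Gaussian moments `E[U^(2k)] = (2k - 1)‼`,
which follow from integrating by parts against the density.
-/

open MeasureTheory ProbabilityTheory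

/-- The product-normal law `PN(μX, μY; σX², σY²; ρ)`: the law of `X * Y` where
`X = μX + σX * U`, `Y = μY + σY * (ρ * U + √(1 - ρ²) * V)` and `U, V` are independent
standard normal random variables. -/
noncomputable def PN (μX μY σX σY ρ : ℝ) : Measure ℝ :=
  Measure.map
    (fun p : ℝ × ℝ =>
      (μX + σX * p.1) * (μY + σY * (ρ * p.1 + Real.sqrt (1 - ρ ^ 2) * p.2)))
    ((gaussianReal 0 1).prod (gaussianReal 0 1))

/-- The law of the mean `Z̄ₙ = n⁻¹ ∑ᵢ Zᵢ` of `n` independent random variables with law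
`PN(μX, μY; σX², σY²; ρ)`. -/
noncomputable def PNbar (n : ℕ) (μX μY σX σY ρ : ℝ) : Measure ℝ :=
  Measure.map (fun ω : Fin n → ℝ => (∑ i, ω i) / (n : ℝ))
    (Measure.pi fun _ : Fin n => PN μX μY σX σY ρ)

open Polynomial
open scoped NNReal

namespace ProbabilityTheory

variable {μ : ℝ} {v : ℝ≥0}

lemma integrable_pow_gaussianReal (n : ℕ) : Integrable (fun x => x ^ n) (gaussianReal μ v) := by
  have h := (memLp_id_gaussianReal (μ := μ) (v := v) n).integrable_norm_pow'
  exact (integrable_norm_iff (by fun_prop)).1 (by simpa using h)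

lemma integrable_eval_gaussianReal (P : ℝ[X]) :
    Integrable (fun x => P.eval x) (gaussianReal μ v) := by
  induction P using Polynomial.induction_on' with
  | add P Q hP hQ => simp only [eval_add]; exact hP.add hQ
  | monomial n a => simpa using (integrable_pow_gaussianReal n).const_mul a

lemma hasDerivAt_gaussianPDFReal_zero (x : ℝ) :
    HasDerivAt (gaussianPDFReal 0 v) (-(x / v) * gaussianPDFReal 0 v x) x := by
  have h : HasDerivAt (fun y : ℝ => -y ^ 2 / (2 * v)) (-(x / v)) x :=
    ((hasDerivAt_pow 2 x).fun_neg.div_const _).congr_deriv (by ring)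
  simp only [gaussianPDFReal_def, sub_zero]
  exact (h.exp.const_mul _).congr_deriv (by ring)

lemma integrable_gaussianPDFReal_mul_pow (hv : v ≠ 0) (n : ℕ) :
    Integrable (fun x => gaussianPDFReal μ v x * x ^ n) := by
  have h := integrable_pow_gaussianReal (μ := μ) (v := v) n
  rw [gaussianReal_of_var_ne_zero _ hv, integrable_withDensity_iff_integrable_smul'
    (measurable_gaussianPDF _ _) (ae_of_all _ fun _ => gaussianPDF_lt_top)] at h
  simpa [toReal_gaussianPDF] using h

lemma integral_pow_add_two_gaussianReal (n : ℕ) :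
    ∫ x, x ^ (n + 2) ∂gaussianReal 0 v = (n + 1) * v * ∫ x, x ^ n ∂gaussianReal 0 v := by
  rcases eq_or_ne v 0 with rfl | hv
  · simp [gaussianReal_zero_var]
  simp only [integral_gaussianReal_eq_integral_smul hv, smul_eq_mul]
  have hI := integrable_gaussianPDFReal_mul_pow (μ := 0) hv
  have hderiv : ∀ x, HasDerivAt (fun x => x ^ (n + 1) * gaussianPDFReal 0 v x)
      ((n + 1) * (gaussianPDFReal 0 v x * x ^ n)
        - (v : ℝ)⁻¹ * (gaussianPDFReal 0 v x * x ^ (n + 2))) x := fun x =>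
    ((hasDerivAt_pow (n + 1) x).mul (hasDerivAt_gaussianPDFReal_zero x)).congr_deriv
      (by push_cast; ring)
  have h0 := integral_eq_zero_of_hasDerivAt_of_integrable hderiv
    (((hI n).const_mul _).sub ((hI (n + 2)).const_mul _)) (by simpa [mul_comm] using hI (n + 1))
  rw [integral_sub ((hI n).const_mul _) ((hI (n + 2)).const_mul _), integral_const_mul,
    integral_const_mul, sub_eq_zero] at h0
  have hv' : (v : ℝ) ≠ 0 := by exact_mod_cast hv
  field_simp at h0
  linarith

lemma integral_pow_gaussianReal (n : ℕ) :
    ∫ x, x ^ n ∂gaussianReal 0 v =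
      if Even n then (v : ℝ) ^ (n / 2) * (n - 1).doubleFactorial else 0 := by
  induction n using Nat.twoStepInduction with
  | zero => simp
  | one => simp [integral_id_gaussianReal]
  | more n ih _ =>
    rw [integral_pow_add_two_gaussianReal, ih, show n + 2 - 1 = n + 1 by omega,
      Nat.doubleFactorial_add_one, show (n + 2) / 2 = n / 2 + 1 by omega]
    simp only [Nat.even_add_one, not_not]
    split_ifs
    · push_cast; ring
    · simp

lemma integral_sum_mul_pow_gaussianReal {n : ℕ} (c : Fin n → ℝ) :
    ∫ x, ∑ i, c i * x ^ (i : ℕ) ∂gaussianReal μ v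
      = ∑ i, c i * ∫ x, x ^ (i : ℕ) ∂gaussianReal μ v := by
  rw [integral_finsetSum _ fun i _ => (integrable_pow_gaussianReal _).const_mul _]
  simp only [integral_const_mul]

lemma integrable_prod_eval_add_eval_mul_pow {μ' : ℝ} {v' : ℝ≥0} (A B : ℝ[X]) (k : ℕ) :
    Integrable (fun p : ℝ × ℝ => (A.eval p.1 + B.eval p.1 * p.2) ^ k)
      ((gaussianReal μ v).prod (gaussianReal μ' v')) := by
  have h : ∀ p : ℝ × ℝ, (A.eval p.1 + B.eval p.1 * p.2) ^ k
      = ∑ j ∈ Finset.range (k + 1),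
          (A ^ j * B ^ (k - j) * (k.choose j : ℝ[X])).eval p.1 * p.2 ^ (k - j) := by
    intro p
    rw [add_pow]
    refine Finset.sum_congr rfl fun j _ => ?_
    simp only [eval_mul, eval_pow, eval_natCast]
    ring
  simp_rw [h]
  exact integrable_finsetSum _ fun j _ =>
    (integrable_eval_gaussianReal _).mul_prod (integrable_pow_gaussianReal _)

lemma integral_add_mul_sq_gaussianReal (a b : ℝ) :
    ∫ x, (a + b * x) ^ 2 ∂gaussianReal 0 1 = a ^ 2 + b ^ 2 := by
  have h : ∀ x : ℝ, (a + b * x) ^ 2 = ∑ i : Fin 3, ![a ^ 2, 2 * a * b, b ^ 2] i * x ^ (i : ℕ) := by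
    intro x; simp [Fin.sum_univ_succ]; ring
  simp_rw [h, integral_sum_mul_pow_gaussianReal]
  simp [Fin.sum_univ_succ, integral_pow_gaussianReal, Nat.even_iff]

lemma integral_add_mul_pow_four_gaussianReal (a b : ℝ) :
    ∫ x, (a + b * x) ^ 4 ∂gaussianReal 0 1 = a ^ 4 + 6 * a ^ 2 * b ^ 2 + 3 * b ^ 4 := by
  have h : ∀ x : ℝ, (a + b * x) ^ 4
      = ∑ i : Fin 5, ![a ^ 4, 4 * a ^ 3 * b, 6 * a ^ 2 * b ^ 2, 4 * a * b ^ 3, b ^ 4] i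
          * x ^ (i : ℕ) := by
    intro x; simp [Fin.sum_univ_succ]; ring
  simp_rw [h, integral_sum_mul_pow_gaussianReal]
  simp [Fin.sum_univ_succ, integral_pow_gaussianReal, Nat.even_iff]
  ring

lemma integral_prod_eval_add_eval_mul_sq (A B : ℝ[X]) :
    ∫ p : ℝ × ℝ, (A.eval p.1 + B.eval p.1 * p.2) ^ 2 ∂(gaussianReal μ v).prod (gaussianReal 0 1)
      = ∫ u, (A ^ 2 + B ^ 2).eval u ∂gaussianReal μ v := by
  rw [integral_prod _ (integrable_prod_eval_add_eval_mul_pow A B 2)]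
  simp [integral_add_mul_sq_gaussianReal]

lemma integral_prod_eval_add_eval_mul_pow_four (A B : ℝ[X]) :
    ∫ p : ℝ × ℝ, (A.eval p.1 + B.eval p.1 * p.2) ^ 4 ∂(gaussianReal μ v).prod (gaussianReal 0 1)
      = ∫ u, (A ^ 4 + 6 * A ^ 2 * B ^ 2 + 3 * (B ^ 2) ^ 2).eval u ∂gaussianReal μ v := by
  rw [integral_prod _ (integrable_prod_eval_add_eval_mul_pow A B 4)]
  simp [integral_add_mul_pow_four_gaussianReal, ← pow_mul]

lemma integral_quadratic_sq_add_quadratic_gaussianReal (a b d c₀ c₁ c₂ : ℝ) :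
    ∫ u, (a + b * u + d * u ^ 2) ^ 2 + (c₀ + c₁ * u + c₂ * u ^ 2) ∂gaussianReal 0 1
      = a ^ 2 + 2 * a * d + b ^ 2 + 3 * d ^ 2 + c₀ + c₂ := by
  have h : ∀ u : ℝ, (a + b * u + d * u ^ 2) ^ 2 + (c₀ + c₁ * u + c₂ * u ^ 2)
      = ∑ i : Fin 5, ![a ^ 2 + c₀, 2 * a * b + c₁, b ^ 2 + 2 * a * d + c₂, 2 * b * d, d ^ 2] i
          * u ^ (i : ℕ) := by
    intro u; simp [Fin.sum_univ_succ]; ring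
  simp_rw [h, integral_sum_mul_pow_gaussianReal]
  simp [Fin.sum_univ_succ, integral_pow_gaussianReal, Nat.even_iff]
  ring

lemma integral_quadratic_pow_four_add_gaussianReal (a b d c₀ c₁ c₂ : ℝ) :
    ∫ u, (a + b * u + d * u ^ 2) ^ 4 + 6 * (a + b * u + d * u ^ 2) ^ 2 * (c₀ + c₁ * u + c₂ * u ^ 2)
        + 3 * (c₀ + c₁ * u + c₂ * u ^ 2) ^ 2 ∂gaussianReal 0 1
      = a ^ 4 + 4 * a ^ 3 * d + 6 * a ^ 2 * b ^ 2 + 18 * a ^ 2 * d ^ 2 + 6 * a ^ 2 * c₀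
        + 6 * a ^ 2 * c₂ + 36 * a * b ^ 2 * d + 12 * a * b * c₁ + 60 * a * d ^ 3 + 12 * a * d * c₀
        + 36 * a * d * c₂ + 3 * b ^ 4 + 90 * b ^ 2 * d ^ 2 + 6 * b ^ 2 * c₀ + 18 * b ^ 2 * c₂
        + 36 * b * d * c₁ + 105 * d ^ 4 + 18 * d ^ 2 * c₀ + 90 * d ^ 2 * c₂ + 3 * c₀ ^ 2
        + 6 * c₀ * c₂ + 3 * c₁ ^ 2 + 9 * c₂ ^ 2 := by
  have h : ∀ u : ℝ, (a + b * u + d * u ^ 2) ^ 4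
        + 6 * (a + b * u + d * u ^ 2) ^ 2 * (c₀ + c₁ * u + c₂ * u ^ 2)
        + 3 * (c₀ + c₁ * u + c₂ * u ^ 2) ^ 2
      = ∑ i : Fin 9, ![a ^ 4 + 6 * a ^ 2 * c₀ + 3 * c₀ ^ 2,
          4 * a ^ 3 * b + 6 * a ^ 2 * c₁ + 12 * a * b * c₀ + 6 * c₀ * c₁,
          4 * a ^ 3 * d + 6 * a ^ 2 * b ^ 2 + 6 * a ^ 2 * c₂ + 12 * a * b * c₁ + 12 * a * d * c₀
            + 6 * b ^ 2 * c₀ + 6 * c₀ * c₂ + 3 * c₁ ^ 2,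
          12 * a ^ 2 * b * d + 4 * a * b ^ 3 + 12 * a * b * c₂ + 12 * a * d * c₁ + 6 * b ^ 2 * c₁
            + 12 * b * d * c₀ + 6 * c₁ * c₂,
          6 * a ^ 2 * d ^ 2 + 12 * a * b ^ 2 * d + 12 * a * d * c₂ + b ^ 4 + 6 * b ^ 2 * c₂
            + 12 * b * d * c₁ + 6 * d ^ 2 * c₀ + 3 * c₂ ^ 2,
          12 * a * b * d ^ 2 + 4 * b ^ 3 * d + 12 * b * d * c₂ + 6 * d ^ 2 * c₁,
          4 * a * d ^ 3 + 6 * b ^ 2 * d ^ 2 + 6 * d ^ 2 * c₂,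
          4 * b * d ^ 3,
          d ^ 4] i * u ^ (i : ℕ) := by
    intro u; simp [Fin.sum_univ_succ]; ring
  simp_rw [h, integral_sum_mul_pow_gaussianReal]
  simp [Fin.sum_univ_succ, integral_pow_gaussianReal, Nat.even_iff]
  ring

end ProbabilityTheory

lemma sq_C_sqrt_mul {t : ℝ} (ht : 0 ≤ t) (P : ℝ[X]) : (C √t * P) ^ 2 = C t * P ^ 2 := by
  rw [mul_pow, ← C_pow, Real.sq_sqrt ht]

/-- `W = (Z - m) / (σX σY)` for `Z ∼ PN`, with `a = r_X`, `b = r_Y`, as a function of `(U, V)`. -/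
noncomputable def standardizedProduct (a b ρ : ℝ) (p : ℝ × ℝ) : ℝ :=
  (a + p.1) * (b + ρ * p.1 + √(1 - ρ ^ 2) * p.2) - (a * b + ρ)

section StandardizedProduct

variable (a b : ℝ) {ρ : ℝ}

lemma standardizedProduct_eq_eval (p : ℝ × ℝ) :
    standardizedProduct a b ρ p = ((X + C a) * (C ρ * X + C b) - C (a * b + ρ)).eval p.1
      + (C √(1 - ρ ^ 2) * (X + C a)).eval p.1 * p.2 := by
  simp [standardizedProduct]
  ring

lemma integral_standardizedProduct_sq (hρ : ρ ^ 2 ≤ 1) :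
    ∫ p, standardizedProduct a b ρ p ^ 2 ∂(gaussianReal 0 1).prod (gaussianReal 0 1)
      = a ^ 2 + b ^ 2 + 2 * ρ * a * b + ρ ^ 2 + 1 := by
  simp_rw [standardizedProduct_eq_eval]
  rw [integral_prod_eval_add_eval_mul_sq, sq_C_sqrt_mul (sub_nonneg.2 hρ)]
  convert integral_quadratic_sq_add_quadratic_gaussianReal (-ρ)
    (ρ * a + b) ρ ((1 - ρ ^ 2) * a ^ 2) (2 * (1 - ρ ^ 2) * a) (1 - ρ ^ 2) using 1
  · congr 1; ext u; simp; ring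
  · ring

lemma integral_standardizedProduct_pow_four (hρ : ρ ^ 2 ≤ 1) :
    ∫ p, standardizedProduct a b ρ p ^ 4 ∂(gaussianReal 0 1).prod (gaussianReal 0 1)
      = 3 * (a ^ 4 + b ^ 4 + 4 * ρ * a * b * (a ^ 2 + b ^ 2) + 2 * (2 * ρ ^ 2 + 1) * a ^ 2 * b ^ 2)
        + 3 * (2 * (7 * ρ ^ 2 + 3) * (a ^ 2 + b ^ 2) + 4 * ρ * (3 * ρ ^ 2 + 7) * a * b
          + 3 * ρ ^ 4 + 14 * ρ ^ 2 + 3) := by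
  simp_rw [standardizedProduct_eq_eval]
  rw [integral_prod_eval_add_eval_mul_pow_four, sq_C_sqrt_mul (sub_nonneg.2 hρ)]
  convert integral_quadratic_pow_four_add_gaussianReal (-ρ)
    (ρ * a + b) ρ ((1 - ρ ^ 2) * a ^ 2) (2 * (1 - ρ ^ 2) * a) (1 - ρ ^ 2) using 1
  · congr 1; ext u; simp; ring
  · ring

end StandardizedProduct

lemma integral_sub_pow_PN {μX μY σX σY ρ : ℝ} (hσX : σX ≠ 0) (hσY : σY ≠ 0) (k : ℕ) :
    ∫ x, (x - (μX * μY + ρ * σX * σY)) ^ k ∂PN μX μY σX σY ρ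
      = (σX * σY) ^ k * ∫ p, standardizedProduct (μX / σX) (μY / σY) ρ p ^ k
          ∂(gaussianReal 0 1).prod (gaussianReal 0 1) := by
  rw [PN, integral_map (by fun_prop) (by fun_prop), ← integral_const_mul]
  congr 1; ext p
  rw [← mul_pow, standardizedProduct]
  field_simp
  ring

/-- The kurtosis of `Z ∼ PN(μX, μY; σX², σY²; ρ)`, i.e. `E[(Z-m)⁴] / (E[(Z-m)²])²` where
`m = E[Z] = μXμY + ρσXσY` (with `r_X = μX/σX`, `r_Y = μY/σY`). -/
theorem kurtosis_PN
    (μX μY σX σY ρ : ℝ) (hσX : 0 < σX) (hσY : 0 < σY)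
    (hρ₁ : -1 < ρ) (hρ₂ : ρ < 1)
    (rX rY : ℝ) (hrX : rX = μX / σX) (hrY : rY = μY / σY)
    (m : ℝ) (hm : m = μX * μY + ρ * σX * σY) :
    (∫ x, (x - m) ^ 4 ∂(PN μX μY σX σY ρ))
        / (∫ x, (x - m) ^ 2 ∂(PN μX μY σX σY ρ)) ^ 2
      = (3 * (rX ^ 4 + rY ^ 4 + 4 * ρ * rX * rY * (rX ^ 2 + rY ^ 2)
              + 2 * (2 * ρ ^ 2 + 1) * rX ^ 2 * rY ^ 2)
          + 3 * (2 * (7 * ρ ^ 2 + 3) * (rX ^ 2 + rY ^ 2) + 4 * ρ * (3 * ρ ^ 2 + 7) * rX * rY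
              + 3 * ρ ^ 4 + 14 * ρ ^ 2 + 3))
        / (rX ^ 2 + rY ^ 2 + 2 * ρ * rX * rY + ρ ^ 2 + 1) ^ 2 := by
  have hρ : ρ ^ 2 ≤ 1 := by nlinarith
  subst hrX hrY hm
  rw [integral_sub_pow_PN hσX.ne' hσY.ne', integral_sub_pow_PN hσX.ne' hσY.ne',
    integral_standardizedProduct_pow_four _ _ hρ, integral_standardizedProduct_sq _ _ hρ,
    mul_pow ((σX * σY) ^ 2), ← pow_mul, mul_div_mul_left _ _ (by positivity)]
end

section
/- Let σ_X = σ_Y = 1, let n ≥ 1 and let Z̄_n be the mean of n independent PN(μ_X,μ_Y;1,1;ρ) random variables. Then for every t ∈ ℝ the characteristic function of Z̄_n is given by E[exp(i t Z̄_n)] = ((1−(1+ρ)it/n)(1+(1−ρ)it/n))^{−n/2} · exp( (−(μ_X²+μ_Y²−2ρμ_Xμ_Y)t²/n + 2μ_Xμ_Y it) / (2(1−(1+ρ)it/n)(1+(1−ρ)it/n)) ), where the complex power w^{−n/2} is the principal branch (well-defined since the complex number (1−(1+ρ)it/n)(1+(1−ρ)it/n) = 1 + (1−ρ²)ت²/n²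 − 2ρit/n has strictly positive real part). -/
/-!
Write `X = μX + U`. Conditionally on `U = u`, `Y` is Gaussian with mean `μY + ρu` and variance
`1 - ρ²`, so `E[exp(isXY) | U = u] = exp(is(μX + u)(μY + ρu) - s²(1 - ρ²)(μX + u)²/2)`. This is the
exponential of a quadratic `bu² + cu + d` with `Re b < 1/2`, whose Gaussian expectation is
`(1 - 2b)^(-1/2) exp(d + c²/(2(1 - 2b)))`; with `1 - 2b = (1 - (1+ρ)is)(1 + (1-ρ)is)` this is the
characteristic function `φ` of `PN`. The mean of `n` independent copies has characteristic function
`φ(t/n)ⁿ`, and `(w^(-1/2))ⁿ = w^(-n/2)` holds for the principal branch since `n` is a natural number.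
-/

open MeasureTheory ProbabilityTheory

open Complex

lemma Complex.ofReal_mul_cpow_of_nonneg {r : ℝ} (hr : 0 ≤ r) (w a : ℂ) :
    ((r : ℂ) * w) ^ a = (r : ℂ) ^ a * w ^ a := by
  rcases hr.eq_or_lt with rfl | hr
  · rcases eq_or_ne a 0 with rfl | ha <;> simp [zero_cpow, *]
  rcases eq_or_ne w 0 with rfl | hw
  · rcases eq_or_ne a 0 with rfl | ha <;> simp [zero_cpow, *]
  have hr' : (r : ℂ) ≠ 0 := by exact_mod_cast hr.ne'
  rw [cpow_def_of_ne_zero (mul_ne_zero hr' hw), cpow_def_of_ne_zero hr', cpow_def_of_ne_zero hw,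
    log_ofReal_mul hr hw, add_mul, exp_add, ← ofReal_log hr.le]

lemma integral_cexp_quadratic_gaussianReal {b : ℂ} (hb : b.re < 1 / 2) (c d : ℂ) :
    ∫ x : ℝ, cexp (b * x ^ 2 + c * x + d) ∂gaussianReal 0 1
      = (1 - 2 * b) ^ (-(1 / 2) : ℂ) * cexp (d + c ^ 2 / (2 * (1 - 2 * b))) := by
  have hre : 0 < (1 - 2 * b).re := by
    simp only [sub_re, one_re, mul_re, re_ofNat, im_ofNat, zero_mul, sub_zero]
    linarith
  have hsqrt : ((√(2 * Real.pi) : ℝ) : ℂ) = ((2 * Real.pi : ℝ) : ℂ) ^ (1 / 2 : ℂ) := by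
    rw [Real.sqrt_eq_rpow, ofReal_cpow (by positivity)]; push_cast; rfl
  calc ∫ x : ℝ, cexp (b * x ^ 2 + c * x + d) ∂gaussianReal 0 1
    _ = ((√(2 * Real.pi) : ℝ) : ℂ)⁻¹ * ∫ x : ℝ, cexp ((b - 1 / 2) * x ^ 2 + c * x + d) := by
      rw [integral_gaussianReal_eq_integral_smul one_ne_zero, ← integral_const_mul]
      congr with x
      simp only [gaussianPDFReal, NNReal.coe_one, mul_one, sub_zero, real_smul]
      push_cast
      rw [mul_assoc, ← exp_add]
      congr 2
      ring
    _ = ((√(2 * Real.pi) : ℝ) : ℂ)⁻¹ * (((2 * Real.pi : ℝ) : ℂ) * (1 - 2 * b)⁻¹) ^ (1 / 2 : ℂ)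
          * cexp (d + c ^ 2 / (2 * (1 - 2 * b))) := by
      rw [integral_cexp_quadratic (by simpa using hb), mul_assoc,
        show b - 1 / 2 = -((1 - 2 * b) / 2) by ring]
      have hne : 1 - 2 * b ≠ 0 := fun h => by simp [h] at hre
      congr 3
      · field_simp
        push_cast
        ring
      · field_simp
        ring
    _ = (1 - 2 * b) ^ (-(1 / 2) : ℂ) * cexp (d + c ^ 2 / (2 * (1 - 2 * b))) := by
      rw [ofReal_mul_cpow_of_nonneg (by positivity), inv_cpow _ _ ?_, ← hsqrt, cpow_neg,
        inv_mul_cancel_left₀ (by simp [Real.sqrt_ne_zero', Real.pi_pos])]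
      exact (arg_lt_pi_iff.mpr (Or.inl hre.le)).ne

lemma charFun_map_pi_sum_div (μ : Measure ℝ) [IsProbabilityMeasure μ] (n : ℕ) (t : ℝ) :
    charFun ((Measure.pi fun _ : Fin n => μ).map fun ω => (∑ i, ω i) / (n : ℝ)) t
      = charFun μ (t / n) ^ n := by
  simp_rw [div_eq_inv_mul]
  rw [charFun_map_mul_comp (by fun_prop), charFun_map_sum_pi_eq_prod]
  simp [mul_comm]

instance (μX μY σX σY ρ : ℝ) : IsProbabilityMeasure (PN μX μY σX σY ρ) := by
  unfold PN
  exact Measure.isProbabilityMeasure_map (by fun_prop)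

lemma charFun_PN_eq_integral_gaussianReal (μX μY : ℝ) {ρ : ℝ} (hρ : ρ ^ 2 ≤ 1) (s : ℝ) :
    charFun (PN μX μY 1 1 ρ) s
      = ∫ u : ℝ, cexp (s * (μX + u) * (μY + ρ * u) * I - s ^ 2 * (1 - ρ ^ 2) * (μX + u) ^ 2 / 2)
          ∂gaussianReal 0 1 := by
  set γ := gaussianReal 0 1
  set c₀ := √(1 - ρ ^ 2)
  have hc₀ : (c₀ : ℂ) ^ 2 = 1 - ρ ^ 2 := by exact_mod_cast Real.sq_sqrt (by linarith)
  set Z : ℝ × ℝ → ℝ := fun p => (μX + 1 * p.1) * (μY + 1 * (ρ * p.1 + c₀ * p.2))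
  have hint : Integrable (fun p => cexp (s * Z p * I)) (γ.prod γ) := by
    refine (integrable_const (1 : ℝ)).mono' (by fun_prop) (ae_of_all _ fun p => ?_)
    rw [← ofReal_mul, norm_exp_ofReal_mul_I]
  rw [PN, charFun_apply_real, integral_map (by fun_prop) (by fun_prop), integral_prod _ hint]
  congr with u
  have hZ (v : ℝ) : (s * Z (u, v) * I : ℂ)
      = 0 * v ^ 2 + I * s * (μX + u) * c₀ * v + I * s * (μX + u) * (μY + ρ * u) := by
    simp only [Z]; push_cast; ring
  simp_rw [hZ]
  rw [integral_cexp_quadratic_gaussianReal (by simp), mul_zero, sub_zero, one_cpow, one_mul]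
  congr 1
  linear_combination (-(s : ℂ) ^ 2 * (μX + u) ^ 2 / 2) * hc₀
    + ((s : ℂ) ^ 2 * c₀ ^ 2 * (μX + u) ^ 2 / 2) * I_sq

theorem charFun_PN (μX μY : ℝ) {ρ : ℝ} (hρ : ρ ^ 2 ≤ 1) (s : ℝ) :
    charFun (PN μX μY 1 1 ρ) s
      = ((1 - (1 + (ρ : ℂ)) * I * s) * (1 + (1 - (ρ : ℂ)) * I * s)) ^ (-(1 / 2) : ℂ)
        * cexp ((-((μX : ℂ) ^ 2 + (μY : ℂ) ^ 2 - 2 * ρ * μX * μY) * s ^ 2 + 2 * μX * μY * I * s)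
            / (2 * ((1 - (1 + (ρ : ℂ)) * I * s) * (1 + (1 - (ρ : ℂ)) * I * s)))) := by
  set b : ℂ := I * s * ρ - s ^ 2 * (1 - ρ ^ 2) / 2
  set c : ℂ := I * s * (ρ * μX + μY) - s ^ 2 * (1 - ρ ^ 2) * μX
  set d : ℂ := I * s * μX * μY - s ^ 2 * (1 - ρ ^ 2) * μX ^ 2 / 2
  have hb : b.re < 1 / 2 := by
    have : b.re = -(s ^ 2 * (1 - ρ ^ 2)) / 2 := by
      simp only [b, pow_two, sub_re, mul_re, I_re, ofReal_re, I_im, ofReal_im, mul_im, div_ofNat_re,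
        one_re]
      ring
    nlinarith [sq_nonneg s]
  have hD : 1 - 2 * b = (1 - (1 + (ρ : ℂ)) * I * s) * (1 + (1 - (ρ : ℂ)) * I * s) := by
    linear_combination (s ^ 2 * (1 - ρ ^ 2) : ℂ) * I_sq
  have hDne : 1 - 2 * b ≠ 0 := fun h => by
    have := congrArg re h
    simp only [sub_re, one_re, mul_re, re_ofNat, im_ofNat, zero_mul, sub_zero, zero_re] at this
    linarith
  have hnum : d * (2 * (1 - 2 * b)) + c ^ 2
      = -((μX : ℂ) ^ 2 + (μY : ℂ) ^ 2 - 2 * ρ * μX * μY) * s ^ 2 + 2 * μX * μY * I * s := by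
    linear_combination ((s : ℂ) ^ 2 * (ρ * μX - μY) ^ 2) * I_sq
  calc charFun (PN μX μY 1 1 ρ) s = ∫ u : ℝ, cexp (b * u ^ 2 + c * u + d) ∂gaussianReal 0 1 := by
        rw [charFun_PN_eq_integral_gaussianReal μX μY hρ]
        congr with u
        simp only [b, c, d]
        ring_nf
    _ = (1 - 2 * b) ^ (-(1 / 2) : ℂ) * cexp (d + c ^ 2 / (2 * (1 - 2 * b))) :=
        integral_cexp_quadratic_gaussianReal hb c d
    _ = _ := by rw [← hD, add_div' _ _ _ (by simpa using hDne), hnum]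

/-- Characteristic function of the mean `Z̄ₙ` of `n` independent `PN(μX, μY; 1, 1; ρ)`
random variables: `E[exp(itZ̄ₙ)]` equals
`((1-(1+ρ)it/n)(1+(1-ρ)it/n))^(-n/2) · exp((-(μX²+μY²-2ρμXμY)t²/n + 2μXμY it) / (2(1-(1+ρ)it/n)(1+(1-ρ)it/n)))`,
where the complex power is the principal branch (Lean's `Complex.cpow`). -/
theorem charFun_PNbar
    (μX μY ρ : ℝ) (hρ₁ : -1 < ρ) (hρ₂ : ρ < 1) (n : ℕ) (hn : 1 ≤ n) (t : ℝ) :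
    ∫ x, Complex.exp (Complex.I * (t : ℂ) * (x : ℂ)) ∂(PNbar n μX μY 1 1 ρ)
      = ((1 - (1 + (ρ : ℂ)) * Complex.I * (t : ℂ) / (n : ℂ))
            * (1 + (1 - (ρ : ℂ)) * Complex.I * (t : ℂ) / (n : ℂ))) ^ (-(n : ℂ) / 2)
          * Complex.exp
              ((-((μX : ℂ) ^ 2 + (μY : ℂ) ^ 2 - 2 * (ρ : ℂ) * (μX : ℂ) * (μY : ℂ))
                    * (t : ℂ) ^ 2 / (n : ℂ)
                  + 2 * (μX : ℂ) * (μY : ℂ) * Complex.I * (t : ℂ))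
                / (2 * ((1 - (1 + (ρ : ℂ)) * Complex.I * (t : ℂ) / (n : ℂ))
                    * (1 + (1 - (ρ : ℂ)) * Complex.I * (t : ℂ) / (n : ℂ))))) := by
  have hρ : ρ ^ 2 ≤ 1 := by nlinarith
  have hn0 : (n : ℂ) ≠ 0 := Nat.cast_ne_zero.mpr (by omega)
  have hchar : ∫ x, cexp (I * t * x) ∂(PNbar n μX μY 1 1 ρ) = charFun (PNbar n μX μY 1 1 ρ) t := by
    simp_rw [charFun_apply_real, mul_rotate I]
  set D := (1 - (1 + (ρ : ℂ)) * I * t / n) * (1 + (1 - (ρ : ℂ)) * I * t / n)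
  have hD : (1 - (1 + (ρ : ℂ)) * I * (t / n : ℝ)) * (1 + (1 - (ρ : ℂ)) * I * (t / n : ℝ)) = D := by
    push_cast
    ring
  rw [hchar, PNbar, charFun_map_pi_sum_div, charFun_PN μX μY hρ, hD, mul_pow, ← cpow_nat_mul,
    ← exp_nat_mul, ← mul_div_assoc]
  congr 1
  · congr 1
    ring
  · congr 2
    push_cast
    field_simp
end

section
/- Let σ_X = σ_Y = 1 and let (X,Y) be bivariate normal with mean vector (μ_X,μ_Y), unit variances and correlation ρ ∈ (−1,1), and Z = XY. Then for every continuously differentiable f : ℝ → ℝ such that all expectations below exist (e.g. f with bounded derivative), E[Z f(Z)] = (1−ρ²)·E[X² f′(Z)] + ρ·E[(X−μ_X)·X·f(Z)] + μ_Y·E[X f(Z)]. -/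
open MeasureTheory ProbabilityTheory

section SteinAux
open Real Filter
open scoped ENNReal NNReal Topology
open MeasureTheory ProbabilityTheory Real Filter
open scoped ENNReal NNReal Topology

noncomputable def stdphi : ℝ → ℝ := gaussianPDFReal 0 1

lemma stdphi_nonneg (x : ℝ) : 0 ≤ stdphi x := gaussianPDFReal_nonneg 0 1 x

lemma stdphi_eq : stdphi = fun x => (Real.sqrt (2 * π))⁻¹ * Real.exp (-(x ^ 2) / 2) := by
  ext x
  simp [stdphi, gaussianPDFReal]

lemma stdphi_cont : Continuous stdphi := by
  rw [stdphi_eq]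
  continuity

lemma stdphi_integrable : Integrable stdphi := integrable_gaussianPDFReal 0 1

lemma hasDerivAt_stdphi (x : ℝ) : HasDerivAt stdphi (-x * stdphi x) x := by
  rw [stdphi_eq]
  have h1 : HasDerivAt (fun x : ℝ => -(x ^ 2) / 2) (-x) x := by
    have := ((hasDerivAt_pow 2 x).neg).div_const 2
    simpa using this.congr_deriv (by ring)
  have h2 := (h1.exp).const_mul (Real.sqrt (2 * π))⁻¹
  exact h2.congr_deriv (by beta_reduce; ring)

lemma stdgamma_eq : gaussianReal 0 1 = volume.withDensity (fun x => ENNReal.ofReal (stdphi x)) := by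
  rw [gaussianReal_of_var_ne_zero 0 one_ne_zero]
  rfl

lemma integral_stdgamma (g : ℝ → ℝ) :
    ∫ x, g x ∂(gaussianReal 0 1) = ∫ x, stdphi x * g x := by
  have he : (fun x => ENNReal.ofReal (stdphi x)) = fun x => ((stdphi x).toNNReal : ℝ≥0∞) := rfl
  rw [stdgamma_eq, he,
    integral_withDensity_eq_integral_smul stdphi_cont.measurable.real_toNNReal g]
  congr 1
  ext x
  simp [NNReal.smul_def, Real.coe_toNNReal _ (stdphi_nonneg x)]

lemma integrable_stdgamma_iff (g : ℝ → ℝ) :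
    Integrable g (gaussianReal 0 1) ↔ Integrable (fun x => stdphi x * g x) volume := by
  have he : (fun x => ENNReal.ofReal (stdphi x)) = fun x => ((stdphi x).toNNReal : ℝ≥0∞) := rfl
  rw [stdgamma_eq, he,
    integrable_withDensity_iff_integrable_smul stdphi_cont.measurable.real_toNNReal]
  constructor <;> intro h <;> refine h.congr (Filter.Eventually.of_forall fun x => ?_) <;>
    simp [NNReal.smul_def, Real.coe_toNNReal _ (stdphi_nonneg x)]

lemma limit_zero_of_integrable {h : ℝ → ℝ} (hint : Integrable h) {L : ℝ}
    (hL : Tendsto h atTop (𝓝 L)) : L = 0 := by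
  by_contra hL0
  have hpos : 0 < |L| / 2 := by positivity
  have hev : ∀ᶠ x in atTop, |L| / 2 ≤ ‖h x‖ := by
    filter_upwards [Metric.tendsto_nhds.mp hL (|L| / 2) hpos] with x hx
    have : |h x - L| < |L| / 2 := by simpa [Real.dist_eq] using hx
    have := abs_sub_abs_le_abs_sub L (h x)
    rw [abs_sub_comm] at this
    simp only [Real.norm_eq_abs]
    linarith
  obtain ⟨a, ha⟩ := eventually_atTop.mp hev
  have hio : Integrable h (volume.restrict (Set.Ioi a)) := hint.integrableOn
  have hbound : ENNReal.ofReal (|L| / 2) * volume (Set.Ioi a)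
      ≤ ∫⁻ x in Set.Ioi a, ‖h x‖₊ := by
    rw [← setLIntegral_const]
    refine setLIntegral_mono' measurableSet_Ioi fun x hx => ?_
    rw [← enorm_eq_nnnorm, ← ofReal_norm_eq_enorm]
    exact ENNReal.ofReal_le_ofReal (ha x hx.le)
  rw [Real.volume_Ioi] at hbound
  rw [ENNReal.mul_top (ENNReal.ofReal_pos.mpr hpos).ne'] at hbound
  exact absurd hio.2 (by simp [HasFiniteIntegral]; exact top_le_iff.mp hbound)

lemma limit_zero_of_integrable' {h : ℝ → ℝ} (hint : Integrable h) {L : ℝ}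
    (hL : Tendsto h atBot (𝓝 L)) : L = 0 := by
  refine limit_zero_of_integrable (h := fun x => h (-x)) ?_ ?_
  · exact hint.comp_neg
  · exact hL.comp tendsto_neg_atTop_atBot

lemma stein_gauss (g : ℝ → ℝ) (hg : ContDiff ℝ 1 g)
    (h1 : Integrable (fun v => v * g v) (gaussianReal 0 1))
    (h2 : Integrable (deriv g) (gaussianReal 0 1)) :
    ∫ v, v * g v ∂(gaussianReal 0 1) = ∫ v, deriv g v ∂(gaussianReal 0 1) := by
  have hgc : Continuous g := hg.continuous
  have hgd : Continuous (deriv g) := hg.continuous_deriv le_rfl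
  set A : ℝ → ℝ := fun x => stdphi x * (x * g x) with hA
  set B : ℝ → ℝ := fun x => stdphi x * deriv g x with hB
  have hAint : Integrable A := (integrable_stdgamma_iff _).mp h1
  have hBint : Integrable B := (integrable_stdgamma_iff _).mp h2
  set h : ℝ → ℝ := fun x => stdphi x * g x with hh
  have hderiv : ∀ x, HasDerivAt h (B x - A x) x := by
    intro x
    have hgx : HasDerivAt g (deriv g x) x :=
      ((hg.differentiable one_ne_zero) x).hasDerivAt
    have := (hasDerivAt_stdphi x).mul hgx
    refine this.congr_deriv ?_
    simp only [hA, hB]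
    ring
  have hcont : Continuous h := stdphi_cont.mul hgc
  have hprime : Integrable (fun x => B x - A x) := hBint.sub hAint
  -- h is integrable
  obtain ⟨C, hC⟩ := (isCompact_Icc (a := (-1 : ℝ)) (b := 1)).exists_bound_of_continuousOn
    hgc.continuousOn
  have hint : Integrable h := by
    refine Integrable.mono' (g := fun x => |A x| + max C 0 * stdphi x)
      (hAint.abs.add (stdphi_integrable.const_mul _)) hcont.aestronglyMeasurable
      (Filter.Eventually.of_forall fun x => ?_)
    show ‖h x‖ ≤ |A x| + max C 0 * stdphi x
    rcases le_total (|x|) 1 with hx | hx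
    · have hCx : |g x| ≤ max C 0 := by
        refine le_trans ?_ (le_max_left _ _)
        simpa using hC x (abs_le.mp hx)
      have : ‖h x‖ ≤ max C 0 * stdphi x := by
        rw [hh, Real.norm_eq_abs, abs_mul, abs_of_nonneg (stdphi_nonneg x)]
        calc stdphi x * |g x| ≤ stdphi x * max C 0 :=
              mul_le_mul_of_nonneg_left hCx (stdphi_nonneg x)
          _ = max C 0 * stdphi x := mul_comm _ _
      have h0 : 0 ≤ |A x| := abs_nonneg _
      linarith
    · have : ‖h x‖ ≤ |A x| := by
        rw [hh, hA, Real.norm_eq_abs]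
        have : |stdphi x * g x| = stdphi x * |g x| := by
          rw [abs_mul, abs_of_nonneg (stdphi_nonneg x)]
        rw [this, abs_mul, abs_mul, abs_of_nonneg (stdphi_nonneg x)]
        rw [← mul_assoc]
        refine mul_le_mul_of_nonneg_right ?_ (abs_nonneg _)
        nlinarith [stdphi_nonneg x]
      have h0 : 0 ≤ max C 0 * stdphi x := mul_nonneg (le_max_right _ _) (stdphi_nonneg x)
      linarith
  -- limits
  have hfund : ∀ x : ℝ, h x = h 0 + ∫ t in (0:ℝ)..x, (B t - A t) := by
    intro x
    have := intervalIntegral.integral_eq_sub_of_hasDerivAt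
      (f := h) (f' := fun t => B t - A t) (a := 0) (b := x)
      (fun t _ => hderiv t) hprime.intervalIntegrable
    linarith [this]
  have htop : Tendsto h atTop (𝓝 (h 0 + ∫ t in Set.Ioi (0:ℝ), (B t - A t))) := by
    have := intervalIntegral_tendsto_integral_Ioi (μ := volume) 0
      hprime.integrableOn tendsto_id
    have := this.const_add (h 0)
    refine Tendsto.congr (fun x => (hfund x).symm) this
  have hbot : Tendsto h atBot (𝓝 (h 0 - ∫ t in Set.Iic (0:ℝ), (B t - A t))) := by
    have h2 := intervalIntegral_tendsto_integral_Iic (μ := volume) 0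
      hprime.integrableOn tendsto_id
    have h3 : Tendsto (fun x : ℝ => h 0 - ∫ t in x..(0:ℝ), (B t - A t)) atBot
        (𝓝 (h 0 - ∫ t in Set.Iic (0:ℝ), (B t - A t))) := (h2.const_sub (h 0))
    refine Tendsto.congr (fun x => ?_) h3
    rw [hfund x, intervalIntegral.integral_symm]
    ring
  have e1 : h 0 + ∫ t in Set.Ioi (0:ℝ), (B t - A t) = 0 := limit_zero_of_integrable hint htop
  have e2 : h 0 - ∫ t in Set.Iic (0:ℝ), (B t - A t) = 0 := limit_zero_of_integrable' hint hbot
  have etot : ∫ t, (B t - A t) = 0 := by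
    rw [← intervalIntegral.integral_Iic_add_Ioi (hprime.integrableOn) (hprime.integrableOn)]
    linarith
  have hBA : (∫ t, B t) = ∫ t, A t := by
    have hs := integral_sub hBint hAint
    rw [etot] at hs
    linarith [hs]
  rw [integral_stdgamma, integral_stdgamma]
  exact hBA.symm

lemma stein_gauss' (f : ℝ → ℝ) (hf : ContDiff ℝ 1 f) (a b : ℝ)
    (h1 : Integrable (fun v => v * f (a + b * v)) (gaussianReal 0 1))
    (h2 : Integrable (fun v => deriv f (a + b * v)) (gaussianReal 0 1)) :
    ∫ v, v * f (a + b * v) ∂(gaussianReal 0 1)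
      = b * ∫ v, deriv f (a + b * v) ∂(gaussianReal 0 1) := by
  set g : ℝ → ℝ := fun v => f (a + b * v) with hg
  have hgc : ContDiff ℝ 1 g :=
    hf.comp (contDiff_const.add (contDiff_const.mul contDiff_id))
  have hgd : ∀ v, HasDerivAt g (deriv f (a + b * v) * b) v := by
    intro v
    have haff : HasDerivAt (fun v : ℝ => a + b * v) b v := by
      simpa using ((hasDerivAt_id v).const_mul b).const_add a
    exact (((hf.differentiable one_ne_zero) _).hasDerivAt).comp v haff
  have hderiv_eq : deriv g = fun v => deriv f (a + b * v) * b :=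
    funext fun v => (hgd v).deriv
  have h2' : Integrable (deriv g) (gaussianReal 0 1) := by
    rw [hderiv_eq]; exact h2.mul_const b
  have := stein_gauss g hgc h1 h2'
  rw [hderiv_eq] at this
  rw [this]
  simp only []
  rw [MeasureTheory.integral_mul_const, mul_comm]


end SteinAux

/-- For `(X, Y)` bivariate normal with mean vector `(μX, μY)`, unit variances and correlation
`ρ ∈ (-1, 1)` (constructed as `X = μX + U`, `Y = μY + ρU + √(1-ρ²)V` with `U, V` independent
standard normals) and `Z = XY`: for every continuously differentiable `f : ℝ → ℝ` such that all
the expectations below exist,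
`E[Z f(Z)] = (1-ρ²) E[X² f'(Z)] + ρ E[(X-μX) X f(Z)] + μY E[X f(Z)]`. -/
theorem stein_identity_conditioning_step
    {Ω : Type*} [MeasurableSpace Ω] (P : Measure Ω) [IsProbabilityMeasure P]
    (μX μY ρ : ℝ) (hρ₁ : -1 < ρ) (hρ₂ : ρ < 1)
    (U V : Ω → ℝ) (hU : Measurable U) (hV : Measurable V)
    (hUV : IndepFun U V P)
    (hUlaw : Measure.map U P = gaussianReal 0 1)
    (hVlaw : Measure.map V P = gaussianReal 0 1)
    (X Y Z : Ω → ℝ)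
    (hX : X = fun ω => μX + U ω)
    (hY : Y = fun ω => μY + ρ * U ω + Real.sqrt (1 - ρ ^ 2) * V ω)
    (hZ : Z = fun ω => X ω * Y ω)
    (f : ℝ → ℝ) (hf : ContDiff ℝ 1 f)
    (h₁ : Integrable (fun ω => Z ω * f (Z ω)) P)
    (h₂ : Integrable (fun ω => (X ω) ^ 2 * deriv f (Z ω)) P)
    (h₃ : Integrable (fun ω => (X ω - μX) * X ω * f (Z ω)) P)
    (h₄ : Integrable (fun ω => X ω * f (Z ω)) P) :
    ∫ ω, Z ω * f (Z ω) ∂P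
      = (1 - ρ ^ 2) * ∫ ω, (X ω) ^ 2 * deriv f (Z ω) ∂P
        + ρ * ∫ ω, (X ω - μX) * X ω * f (Z ω) ∂P
        + μY * ∫ ω, X ω * f (Z ω) ∂P := by
  subst hZ hY hX
  beta_reduce at h₁ h₂ h₃ h₄ ⊢
  set s : ℝ := Real.sqrt (1 - ρ ^ 2) with hs
  have hρsq : ρ ^ 2 < 1 := by nlinarith
  have hspos : 0 < s := Real.sqrt_pos.mpr (by linarith)
  have hs2 : s ^ 2 = 1 - ρ ^ 2 := Real.sq_sqrt (by linarith)
  set κ : Measure ℝ := gaussianReal 0 1 with hκ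
  have hfc : Continuous f := hf.continuous
  have hdc : Continuous (deriv f) := hf.continuous_deriv le_rfl
  have hpm : Measurable fun ω => (U ω, V ω) := hU.prodMk hV
  have hmap : Measure.map (fun ω => (U ω, V ω)) P = κ.prod κ := by
    have h0 := (indepFun_iff_map_prod_eq_prod_map_map hU.aemeasurable hV.aemeasurable).mp hUV
    rw [hUlaw, hVlaw] at h0
    exact h0
  have hint_transfer : ∀ (W : ℝ × ℝ → ℝ), Continuous W →
      Integrable (fun ω => W (U ω, V ω)) P → Integrable W (κ.prod κ) := by
    intro W hWc hWi
    rw [← hmap]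
    exact (integrable_map_measure hWc.aestronglyMeasurable hpm.aemeasurable).mpr hWi
  have hieq : ∀ (W : ℝ × ℝ → ℝ), Continuous W →
      ∫ ω, W (U ω, V ω) ∂P = ∫ p, W p ∂(κ.prod κ) := by
    intro W hWc
    rw [← hmap, integral_map hpm.aemeasurable hWc.aestronglyMeasurable]
  -- the mixed-term integrand
  set G : ℝ × ℝ → ℝ :=
    fun p => (μX + p.1) * p.2 * f ((μX + p.1) * (μY + ρ * p.1 + s * p.2)) with hG
  set H : ℝ × ℝ → ℝ :=
    fun p => (μX + p.1) ^ 2 * deriv f ((μX + p.1) * (μY + ρ * p.1 + s * p.2)) with hH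
  have hGc : Continuous G := by rw [hG]; fun_prop
  have hHc : Continuous H := by rw [hH]; fun_prop
  -- integrability of the mixed term
  have hXVf : Integrable (fun ω => G (U ω, V ω)) P := by
    have hcomb : (fun ω => s * G (U ω, V ω))
        = fun ω => ((μX + U ω) * (μY + ρ * U ω + s * V ω))
              * f ((μX + U ω) * (μY + ρ * U ω + s * V ω))
            - ρ * ((μX + U ω - μX) * (μX + U ω)
              * f ((μX + U ω) * (μY + ρ * U ω + s * V ω)))
            - μY * ((μX + U ω) * f ((μX + U ω) * (μY + ρ * U ω + s * V ω))) := by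
      funext ω
      rw [hG]
      ring
    have h5 : Integrable (fun ω => s * G (U ω, V ω)) P := by
      rw [hcomb]
      exact (h₁.sub (h₃.const_mul ρ)).sub (h₄.const_mul μY)
    have h6 := h5.const_mul s⁻¹
    refine h6.congr (Filter.Eventually.of_forall fun ω => ?_)
    field_simp
  have hGprod : Integrable G (κ.prod κ) := hint_transfer G hGc hXVf
  have hHprod : Integrable H (κ.prod κ) := hint_transfer H hHc h₂
  -- the key conditional Stein step
  have hkey : ∫ p, G p ∂(κ.prod κ) = s * ∫ p, H p ∂(κ.prod κ) := by
    rw [MeasureTheory.integral_prod _ hGprod, MeasureTheory.integral_prod _ hHprod,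
      ← MeasureTheory.integral_const_mul]
    refine integral_congr_ae ?_
    filter_upwards [hGprod.prod_right_ae, hHprod.prod_right_ae] with u hGu hHu
    set c : ℝ := μX + u with hc
    set A : ℝ := c * (μY + ρ * u) with hA
    set B : ℝ := s * c with hB
    have harg : ∀ v : ℝ, c * (μY + ρ * u + s * v) = A + B * v := by
      intro v; rw [hA, hB]; ring
    have hGfun : (fun v => G (u, v)) = fun v => c * (v * f (A + B * v)) := by
      funext v
      rw [hG]
      simp only []
      rw [← hc, harg v]
      ring
    have hHfun : (fun v => H (u, v)) = fun v => c ^ 2 * deriv f (A + B * v) := by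
      funext v
      rw [hH]
      simp only []
      rw [← hc, harg v]
    by_cases hc0 : c = 0
    · simp [hGfun, hHfun, hc0]
    · have hGu' : Integrable (fun v => c * (v * f (A + B * v))) κ := by rwa [hGfun] at hGu
      have hHu' : Integrable (fun v => c ^ 2 * deriv f (A + B * v)) κ := by rwa [hHfun] at hHu
      have h1' : Integrable (fun v => v * f (A + B * v)) κ := by
        have h7 := hGu'.const_mul c⁻¹
        refine h7.congr (Filter.Eventually.of_forall fun v => ?_)
        field_simp
      have h2' : Integrable (fun v => deriv f (A + B * v)) κ := by
        have h7 := hHu'.const_mul (c ^ 2)⁻¹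
        refine h7.congr (Filter.Eventually.of_forall fun v => ?_)
        field_simp
      have hst := stein_gauss' f hf A B h1' h2'
      rw [hGfun, hHfun, MeasureTheory.integral_const_mul, MeasureTheory.integral_const_mul,
        hst, hB]
      ring
  -- transfer back and assemble
  have hIG : ∫ ω, G (U ω, V ω) ∂P = ∫ p, G p ∂(κ.prod κ) := hieq G hGc
  have hIH : ∫ ω, (μX + U ω) ^ 2 * deriv f ((μX + U ω) * (μY + ρ * U ω + s * V ω)) ∂P
      = ∫ p, H p ∂(κ.prod κ) := hieq H hHc
  have hmix : s * (∫ ω, G (U ω, V ω) ∂P)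
      = (1 - ρ ^ 2)
        * ∫ ω, (μX + U ω) ^ 2 * deriv f ((μX + U ω) * (μY + ρ * U ω + s * V ω)) ∂P := by
    rw [hIG, hkey, ← hIH, ← mul_assoc, ← pow_two, hs2]
  have hid : (fun ω => (μX + U ω) * (μY + ρ * U ω + s * V ω)
        * f ((μX + U ω) * (μY + ρ * U ω + s * V ω)))
      = fun ω => (ρ * ((μX + U ω - μX) * (μX + U ω)
            * f ((μX + U ω) * (μY + ρ * U ω + s * V ω)))
          + μY * ((μX + U ω) * f ((μX + U ω) * (μY + ρ * U ω + s * V ω))))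
          + s * G (U ω, V ω) := by
    funext ω
    rw [hG]
    ring
  have hadd1 : Integrable (fun ω => ρ * ((μX + U ω - μX) * (μX + U ω)
        * f ((μX + U ω) * (μY + ρ * U ω + s * V ω)))
      + μY * ((μX + U ω) * f ((μX + U ω) * (μY + ρ * U ω + s * V ω)))) P :=
    (h₃.const_mul ρ).add (h₄.const_mul μY)
  have hadd2 : Integrable (fun ω => s * G (U ω, V ω)) P := hXVf.const_mul s
  rw [hid,
    MeasureTheory.integral_add hadd1 hadd2,
    MeasureTheory.integral_add (h₃.const_mul ρ) (h₄.const_mul μY),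
    MeasureTheory.integral_const_mul, MeasureTheory.integral_const_mul,
    MeasureTheory.integral_const_mul, hmix]
  ring
end
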